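/- arXiv:2009.11127 — 4 statements merged into one kernel-verified Lean document; each statement's English description precedes it below -/
import Mathlib

section
/- Let n ≥ 1 and let Γ be a group of invertible affine transformations of ℝⁿ, where each γ ∈ Γ acts by x ↦ A_γ · x + v_γ with A_γ an invertible n×n real matrix, and suppose the action of Γ on ℝⁿ is free (every γ ≠ id has no fixed point). Let S = {A_γ : γ ∈ Γ} be the set of linear parts, viewed as a subset of the space of n×n real matrices. If g is an n×n real matrix such that every multivariate real polynomial in the n² matrix entries (i.e., every p ∈ MvPolynomial (Fin n × Fin n) ℝ) that vanishes at every element of S also vanishes at g, then det(g − 1) = 0; that is, every element of the Zariski closure of the set of linear parts has 1 as an eigenvalue. -/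
/-!
A linear part `A` with `det (A - 1) ≠ 0` makes `x ↦ A x + v` have the fixed point
`(1 - A)⁻¹ v`, so freeness forces `det (A γ - 1) = 0` for every `γ`. Since `det (X - 1)` is a
polynomial in the entries of `X`, this equation passes to the Zariski closure.
-/

namespace Matrix

theorem det_sub_one_eq_zero_of_forall_add_ne {ι K : Type*} [Fintype ι] [DecidableEq ι]
    [Field K] {A : Matrix ι ι K} {v : ι → K} (hfree : ∀ x, A *ᵥ x + v ≠ x) :
    (A - 1).det = 0 := by
  by_contra hdet
  have hunit : IsUnit (A - 1) := (isUnit_iff_isUnit_det _).mpr (isUnit_iff_ne_zero.mpr hdet)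
  obtain ⟨x, hx⟩ := mulVec_surjective_iff_isUnit.mpr hunit (-v)
  rw [sub_mulVec, one_mulVec] at hx
  exact hfree x (by linear_combination (norm := abel) hx)

theorem eval_det_mvPolynomialX_sub_one {ι R : Type*} [Fintype ι] [DecidableEq ι]
    [CommRing R] (M : Matrix ι ι R) :
    MvPolynomial.eval (fun ij => M ij.1 ij.2) (mvPolynomialX ι ι R - 1).det = (M - 1).det := by
  rw [RingHom.map_det, map_sub, map_one, mvPolynomialX_mapMatrix_eval]

end Matrix

open Matrix in
theorem stmt1_general {n : ℕ} (hn : 1 ≤ n) {Γ : Type*} [Group Γ]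
    (A : Γ → Matrix (Fin n) (Fin n) ℝ) (v : Γ → (Fin n → ℝ))
    (hA1 : A 1 = 1)
    (hfree : ∀ γ : Γ, γ ≠ 1 → ∀ x : Fin n → ℝ, A γ *ᵥ x + v γ ≠ x)
    (g : Matrix (Fin n) (Fin n) ℝ)
    (hg : ∀ p : MvPolynomial (Fin n × Fin n) ℝ,
      (∀ γ : Γ, MvPolynomial.eval (fun ij => A γ ij.1 ij.2) p = 0) →
        MvPolynomial.eval (fun ij => g ij.1 ij.2) p = 0) :
    (g - 1).det = 0 := by
  have : NeZero n := ⟨by omega⟩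
  have hlinear : ∀ γ, (A γ - 1).det = 0 := by
    intro γ
    rcases eq_or_ne γ 1 with rfl | hγ
    · simp [hA1]
    · exact det_sub_one_eq_zero_of_forall_add_ne (hfree γ hγ)
  simpa only [eval_det_mvPolynomialX_sub_one] using
    hg (mvPolynomialX (Fin n) (Fin n) ℝ - 1).det fun γ => by
      rw [eval_det_mvPolynomialX_sub_one]; exact hlinear γ

open Matrix in
/-- Hirsch–Kostant–Sullivan for the Zariski closure: if a group `Γ` acts freely on `ℝⁿ`
by invertible affine transformations `x ↦ A γ *ᵥ x + v γ`, and `g` is a matrix lying in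
the Zariski closure of the set of linear parts (every polynomial in the matrix entries
vanishing on all the `A γ` also vanishes at `g`), then `det (g - 1) = 0`. -/
theorem stmt1 {n : ℕ} (hn : 1 ≤ n) {Γ : Type*} [Group Γ]
    (A : Γ → Matrix (Fin n) (Fin n) ℝ) (v : Γ → (Fin n → ℝ))
    (hinv : ∀ γ, IsUnit (A γ))
    (hA1 : A 1 = 1) (hv1 : v 1 = 0)
    (hAmul : ∀ γ δ, A (γ * δ) = A γ * A δ)
    (hvmul : ∀ γ δ, v (γ * δ) = A γ *ᵥ v δ + v γ)
    (hfree : ∀ γ : Γ, γ ≠ 1 → ∀ x : Fin n → ℝ, A γ *ᵥ x + v γ ≠ x)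
    (g : Matrix (Fin n) (Fin n) ℝ)
    (hg : ∀ p : MvPolynomial (Fin n × Fin n) ℝ,
      (∀ γ : Γ, MvPolynomial.eval (fun ij => A γ ij.1 ij.2) p = 0) →
        MvPolynomial.eval (fun ij => g ij.1 ij.2) p = 0) :
    (g - 1).det = 0 :=
  stmt1_general hn A v hA1 hfree g hg
end

section
/- For every δ ≥ 0 there exists a constant C ≥ 0 with the following property. Let X be a geodesic metric space (any two points are joined by a geodesic segment) in which every geodesic triangle is δ-thin. If l₁, l₂ : ℝ → X are complete isometric geodesics such that the extended Hausdorff distance between their images is finite, then the Hausdorff distance between the images of l₁ and l₂ is at most C. -/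
/-!
Let `p = l₁ t` and choose `R` much larger than `δ` plus the (finite) Hausdorff distance `M`.
The points `a = l₁ (t - R)` and `b = l₁ (t + R)` have partners `c, d` on `l₂` within `M + 1`.
Two thin triangles, cutting the quadrilateral `a b d c` along a diagonal `[a, d]`, put `p`
within `2δ` of `[a, c] ∪ [c, d] ∪ [b, d]`; the short sides `[a, c]` and `[b, d]` are too far
from `p`, so `p` is `2δ`-close to the piece `[c, d]` of `l₂`. Hence `C = 2δ`.
-/

/-- `γ` is a geodesic segment from `x` to `y`: defined on `[0, dist x y]`,
starting at `x`, ending at `y`, and isometric on that interval. -/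
def IsGeodesicSegment {X : Type*} [MetricSpace X] (x y : X) (γ : ℝ → X) : Prop :=
  γ 0 = x ∧ γ (dist x y) = y ∧
    ∀ s ∈ Set.Icc (0 : ℝ) (dist x y), ∀ t ∈ Set.Icc (0 : ℝ) (dist x y),
      dist (γ s) (γ t) = |s - t|

/-- The image of a geodesic segment from `x` to `y`. -/
def segImage {X : Type*} [MetricSpace X] (x y : X) (γ : ℝ → X) : Set X :=
  γ '' Set.Icc (0 : ℝ) (dist x y)

/-- `X` is a geodesic metric space: any two points are joined by a geodesic segment. -/
def IsGeodesicSpace (X : Type*) [MetricSpace X] : Prop :=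
  ∀ x y : X, ∃ γ : ℝ → X, IsGeodesicSegment x y γ

/-- Every geodesic triangle of `X` is `δ`-thin: each point of any side is within
distance `δ` of the union of the other two sides. -/
def ThinTriangles (X : Type*) [MetricSpace X] (δ : ℝ) : Prop :=
  ∀ (x y z : X) (γ₁ γ₂ γ₃ : ℝ → X),
    IsGeodesicSegment x y γ₁ → IsGeodesicSegment y z γ₂ → IsGeodesicSegment x z γ₃ →
    (∀ p ∈ segImage x y γ₁, Metric.infDist p (segImage y z γ₂ ∪ segImage x z γ₃) ≤ δ) ∧
    (∀ p ∈ segImage y z γ₂, Metric.infDist p (segImage x y γ₁ ∪ segImage x z γ₃) ≤ δ) ∧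
    (∀ p ∈ segImage x z γ₃, Metric.infDist p (segImage x y γ₁ ∪ segImage y z γ₂) ≤ δ)

open Metric Set

variable {X : Type*} [MetricSpace X]

lemma IsCompact.exists_dist_le_of_infDist_le {s : Set X} (hs : IsCompact s) (hne : s.Nonempty)
    {x : X} {r : ℝ} (h : infDist x s ≤ r) : ∃ y ∈ s, dist x y ≤ r :=
  let ⟨y, hy, hxy⟩ := hs.exists_infDist_eq_dist hne x
  ⟨y, hy, hxy ▸ h⟩

namespace IsGeodesicSegment

variable {x y : X} {γ : ℝ → X}

lemma isCompact_segImage (hγ : IsGeodesicSegment x y γ) : IsCompact (segImage x y γ) := by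
  refine isCompact_Icc.image_of_continuousOn (LipschitzOnWith.continuousOn (K := 1) ?_)
  refine LipschitzOnWith.of_dist_le_mul fun s hs t ht => ?_
  rw [hγ.2.2 s hs t ht, Real.dist_eq, NNReal.coe_one, one_mul]

lemma start_mem_segImage (hγ : IsGeodesicSegment x y γ) : x ∈ segImage x y γ :=
  ⟨0, ⟨le_rfl, dist_nonneg⟩, hγ.1⟩

lemma dist_le_of_mem_segImage {w : X} (hγ : IsGeodesicSegment x y γ) (hw : w ∈ segImage x y γ) :
    dist w x ≤ dist x y := by
  obtain ⟨u, hu, rfl⟩ := hw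
  have h := hγ.2.2 u hu 0 ⟨le_rfl, dist_nonneg⟩
  rw [hγ.1, sub_zero, abs_of_nonneg hu.1] at h
  exact h.trans_le hu.2

end IsGeodesicSegment

namespace Isometry

variable {l : ℝ → X} {s t : ℝ}

lemma dist_eq_sub (hl : Isometry l) (hst : s ≤ t) : dist (l s) (l t) = t - s := by
  rw [hl.dist_eq, Real.dist_eq, abs_sub_comm, abs_of_nonneg (sub_nonneg.2 hst)]

lemma isGeodesicSegment_comp_add (hl : Isometry l) (hst : s ≤ t) :
    IsGeodesicSegment (l s) (l t) (fun u => l (s + u)) := by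
  refine ⟨by simp, by simp [hl.dist_eq_sub hst], fun u _ v _ => ?_⟩
  rw [hl.dist_eq, Real.dist_eq, add_sub_add_left_eq_sub]

lemma segImage_comp_add (hl : Isometry l) (hst : s ≤ t) :
    segImage (l s) (l t) (fun u => l (s + u)) = l '' Icc s t := by
  rw [segImage, hl.dist_eq_sub hst, ← image_image l (s + ·), image_const_add_Icc, add_zero,
    add_sub_cancel]

lemma exists_isGeodesicSegment_subset_range (hl : Isometry l) (s t : ℝ) :
    ∃ γ, IsGeodesicSegment (l s) (l t) γ ∧ segImage (l s) (l t) γ ⊆ range l := by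
  rcases le_total s t with hst | hts
  · exact ⟨_, hl.isGeodesicSegment_comp_add hst,
      (hl.segImage_comp_add hst).trans_subset (image_subset_range _ _)⟩
  · have hl' : Isometry (l ∘ Neg.neg) := hl.comp isometry_neg
    have hst' : -s ≤ -t := neg_le_neg hts
    have hγ := hl'.isGeodesicSegment_comp_add hst'
    have himage := hl'.segImage_comp_add hst'
    simp only [Function.comp_apply, neg_neg] at hγ himage
    exact ⟨_, hγ, himage.trans_subset
      ((image_subset_range _ _).trans (range_comp_subset_range Neg.neg l))⟩

end Isometry

namespace ThinTriangles

variable {δ : ℝ}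

lemma infDist_opposite_side_le (hgeo : IsGeodesicSpace X) (hthin : ThinTriangles X δ)
    {a b c d p : X} {γ σ : ℝ → X} (hγ : IsGeodesicSegment a b γ) (hσ : IsGeodesicSegment c d σ)
    (hp : p ∈ segImage a b γ) (hpa : dist a c + 2 * δ < dist p a)
    (hpb : dist b d + δ < dist p b) : infDist p (segImage c d σ) ≤ 2 * δ := by
  obtain ⟨τ, hτ⟩ := hgeo a d
  obtain ⟨β, hβ⟩ := hgeo b d
  obtain ⟨w, hw, hpw⟩ :=
    (hβ.isCompact_segImage.union hτ.isCompact_segImage).exists_dist_le_of_infDist_le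
      ⟨b, .inl hβ.start_mem_segImage⟩ ((hthin a b d γ β τ hγ hβ hτ).1 p hp)
  obtain hwβ | hwτ := hw
  · have := dist_triangle p w b
    linarith [hβ.dist_le_of_mem_segImage hwβ]
  obtain ⟨α, hα⟩ := hgeo a c
  obtain ⟨v, hv, hwv⟩ :=
    (hα.isCompact_segImage.union hσ.isCompact_segImage).exists_dist_le_of_infDist_le
      ⟨a, .inl hα.start_mem_segImage⟩ ((hthin a c d α σ τ hα hσ hτ).2.2 w hwτ)
  obtain hvα | hvσ := hv
  · have := dist_triangle4 p w v a
    linarith [hα.dist_le_of_mem_segImage hvα]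
  calc infDist p (segImage c d σ) ≤ dist p v := infDist_le_dist_of_mem hvσ
    _ ≤ dist p w + dist w v := dist_triangle p w v
    _ ≤ 2 * δ := by linarith

lemma infDist_range_le (hgeo : IsGeodesicSpace X) (hthin : ThinTriangles X δ) (hδ : 0 ≤ δ)
    {l₁ l₂ : ℝ → X} (hl₁ : Isometry l₁) (hl₂ : Isometry l₂)
    (hfin : hausdorffEDist (range l₁) (range l₂) ≠ ⊤) (t : ℝ) :
    infDist (l₁ t) (range l₂) ≤ 2 * δ := by
  set M := hausdorffDist (range l₁) (range l₂)
  set R := 2 * δ + M + 2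
  have hR : 0 ≤ R := by linarith [hausdorffDist_nonneg (s := range l₁) (t := range l₂)]
  obtain ⟨_, ⟨sc, rfl⟩, hac⟩ := exists_dist_lt_of_hausdorffDist_lt (mem_range_self (t - R))
    (lt_add_one M) hfin
  obtain ⟨_, ⟨sd, rfl⟩, hbd⟩ := exists_dist_lt_of_hausdorffDist_lt (mem_range_self (t + R))
    (lt_add_one M) hfin
  obtain ⟨σ, hσ, hσl₂⟩ := hl₂.exists_isGeodesicSegment_subset_range sc sd
  have hp : l₁ t ∈ segImage (l₁ (t - R)) (l₁ (t + R)) (fun u => l₁ (t - R + u)) := by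
    rw [hl₁.segImage_comp_add (by linarith)]
    exact mem_image_of_mem _ ⟨by linarith, by linarith⟩
  have hpa : dist (l₁ t) (l₁ (t - R)) = R := by
    rw [dist_comm, hl₁.dist_eq_sub (by linarith)]; ring
  have hpb : dist (l₁ t) (l₁ (t + R)) = R := by rw [hl₁.dist_eq_sub (by linarith)]; ring
  calc infDist (l₁ t) (range l₂) ≤ infDist (l₁ t) (segImage (l₂ sc) (l₂ sd) σ) :=
        infDist_le_infDist_of_subset hσl₂ ⟨_, hσ.start_mem_segImage⟩
    _ ≤ 2 * δ := hthin.infDist_opposite_side_le hgeo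
          (hl₁.isGeodesicSegment_comp_add (by linarith)) hσ hp (by linarith) (by linarith)

end ThinTriangles

/-- In a `δ`-hyperbolic geodesic space, two complete isometric geodesics at finite
Hausdorff distance are at Hausdorff distance at most a constant `C = C(δ)`. -/
theorem stmt6 (δ : ℝ) (hδ : 0 ≤ δ) :
    ∃ C : ℝ, 0 ≤ C ∧
      ∀ (X : Type) (_ : MetricSpace X), IsGeodesicSpace X → ThinTriangles X δ →
        ∀ l₁ l₂ : ℝ → X,
          (∀ s t : ℝ, dist (l₁ s) (l₁ t) = |s - t|) →
          (∀ s t : ℝ, dist (l₂ s) (l₂ t) = |s - t|) →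
          EMetric.hausdorffEdist (Set.range l₁) (Set.range l₂) ≠ ⊤ →
          EMetric.hausdorffEdist (Set.range l₁) (Set.range l₂) ≤ ENNReal.ofReal C := by
  refine ⟨2 * δ, by positivity, fun X _ hgeo hthin l₁ l₂ h₁ h₂ hfin => ?_⟩
  have hl₁ : Isometry l₁ := Isometry.of_dist_eq fun s t => by rw [h₁, Real.dist_eq]
  have hl₂ : Isometry l₂ := Isometry.of_dist_eq fun s t => by rw [h₂, Real.dist_eq]
  have hfin' : hausdorffEDist (range l₂) (range l₁) ≠ ⊤ := by rwa [hausdorffEDist_comm]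
  rw [ENNReal.le_ofReal_iff_toReal_le hfin (by positivity)]
  refine hausdorffDist_le_of_infDist (by positivity) ?_ ?_
  · rintro _ ⟨t, rfl⟩
    exact hthin.infDist_range_le hgeo hδ hl₁ hl₂ hfin t
  · rintro _ ⟨t, rfl⟩
    exact hthin.infDist_range_le hgeo hδ hl₂ hl₁ hfin' t
end

section
/- Let X be a metric space, let g : ℝ → X and gᵢ : ℝ → X (i ∈ ℕ) be complete isometric geodesics. Then ∫_ℝ dist(gᵢ t, g t) · 2^(−|t|) dt → 0 as i → ∞ if and only if gᵢ(t) → g(t) as i → ∞ for every t ∈ ℝ. -/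
/-!
Everything is governed by the functions `φᵢ t = dist (gᵢ t) (g t)`, which are nonnegative and
2-Lipschitz because `gᵢ` and `g` are isometric. The Lipschitz bound `φᵢ t ≤ φᵢ 0 + 2|t|` is
integrable against `2 ^ (-|t|)`, so pointwise convergence gives convergence of the integrals by
dominated convergence. Conversely `φᵢ ≥ φᵢ t₀ - 2r` on `[t₀ - r, t₀ + r]`, where the weight is at
least `2 ^ (-(|t₀| + r))`, so a small integral forces `φᵢ t₀` to be small.
-/

open Filter MeasureTheory Set Topology
open scoped NNReal

lemma integrable_comp_abs_of_integrableOn_Ioi {E : Type*} [NormedAddCommGroup E] {f : ℝ → E}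
    (hf : IntegrableOn f (Ioi 0)) : Integrable fun t => f |t| := by
  have hpos : IntegrableOn (fun t => f |t|) (Ioi 0) :=
    hf.congr_fun (fun t ht => by rw [abs_of_pos (mem_Ioi.mp ht)]) measurableSet_Ioi
  have hneg : IntegrableOn (fun t => f |t|) (Iio 0) := by
    rw [← (Measure.measurePreserving_neg (volume : Measure ℝ)).integrableOn_comp_preimage
      (Homeomorph.neg ℝ).measurableEmbedding]
    simpa [Function.comp_def] using hpos
  rw [← integrableOn_univ, ← Iio_union_Ici, integrableOn_union,
    integrableOn_Ici_iff_integrableOn_Ioi (b := (0 : ℝ))]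
  exact ⟨hneg, hpos⟩

lemma integrable_add_mul_abs_mul_rpow_neg_abs {b : ℝ} (hb : 1 < b) (c K : ℝ) :
    Integrable fun t : ℝ => (c + K * |t|) * b ^ (-|t|) := by
  have h (s : ℝ) (hs : -1 < s) : IntegrableOn (fun x : ℝ => x ^ s * b ^ (-x)) (Ioi 0) :=
    (integrableOn_rpow_mul_exp_neg_mul_rpow hs one_pos (Real.log_pos hb)).congr_fun (fun x _ => by
      simp only [Real.rpow_one, Real.rpow_def_of_pos (zero_lt_one.trans hb)]; ring_nf)
      measurableSet_Ioi
  refine integrable_comp_abs_of_integrableOn_Ioi (f := fun x => (c + K * x) * b ^ (-x)) ?_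
  refine IntegrableOn.congr_fun
    (((h 0 (by norm_num)).const_mul c).add ((h 1 (by norm_num)).const_mul K))
    (fun x _ => ?_) measurableSet_Ioi
  simp only [Pi.add_apply, Real.rpow_zero, Real.rpow_one]
  ring

lemma continuous_rpow_neg_abs {b : ℝ} (hb : 0 < b) : Continuous fun t : ℝ => b ^ (-|t|) :=
  (Real.continuous_const_rpow hb.ne').comp continuous_abs.neg

section

variable {b : ℝ} {K : ℝ≥0} {φ : ℝ → ℝ}

lemma LipschitzWith.norm_mul_rpow_neg_abs_le (hb : 0 < b) (hφ : LipschitzWith K φ) (t : ℝ) :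
    ‖φ t * b ^ (-|t|)‖ ≤ (|φ 0| + K * |t|) * b ^ (-|t|) := by
  have hφt : |φ t| ≤ |φ 0| + K * |t| := by
    have := hφ.dist_le_mul t 0
    rw [Real.dist_eq, Real.dist_eq, sub_zero] at this
    linarith [abs_sub_abs_le_abs_sub (φ t) (φ 0)]
  rw [norm_mul, Real.norm_eq_abs, Real.norm_eq_abs, abs_of_pos (Real.rpow_pos_of_pos hb _)]
  gcongr

lemma LipschitzWith.integrable_mul_rpow_neg_abs (hb : 1 < b) (hφ : LipschitzWith K φ) :
    Integrable fun t => φ t * b ^ (-|t|) :=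
  (integrable_add_mul_abs_mul_rpow_neg_abs hb |φ 0| K).mono'
    (hφ.continuous.mul (continuous_rpow_neg_abs (zero_lt_one.trans hb))).aestronglyMeasurable
    (Eventually.of_forall (hφ.norm_mul_rpow_neg_abs_le (zero_lt_one.trans hb)))

lemma LipschitzWith.mul_sub_le_integral_mul_rpow_neg_abs (hb : 1 < b) (hφ : LipschitzWith K φ)
    (hφ0 : 0 ≤ φ) (t₀ : ℝ) {r : ℝ} (hr : 0 < r) :
    2 * r * b ^ (-(|t₀| + r)) * (φ t₀ - K * r) ≤ ∫ t, φ t * b ^ (-|t|) := by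
  have hle : ∀ t ∈ Icc (t₀ - r) (t₀ + r),
      b ^ (-(|t₀| + r)) * (φ t₀ - K * r) ≤ φ t * b ^ (-|t|) := by
    intro t ht
    have hdist : |t - t₀| ≤ r := abs_sub_le_iff.2 ⟨by linarith [ht.2], by linarith [ht.1]⟩
    have hφt : φ t₀ - K * r ≤ φ t := by
      have := hφ.le_add_mul t₀ t
      rw [Real.dist_eq, abs_sub_comm] at this
      linarith [mul_le_mul_of_nonneg_left hdist K.coe_nonneg]
    have hw : b ^ (-(|t₀| + r)) ≤ b ^ (-|t|) := by
      apply Real.rpow_le_rpow_of_exponent_le hb.le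
      linarith [abs_sub_abs_le_abs_sub t t₀]
    calc b ^ (-(|t₀| + r)) * (φ t₀ - K * r) ≤ b ^ (-(|t₀| + r)) * φ t := by
          gcongr
      _ ≤ b ^ (-|t|) * φ t := by gcongr; exact hφ0 t
      _ = φ t * b ^ (-|t|) := mul_comm _ _
  have hint := hφ.integrable_mul_rpow_neg_abs hb
  calc 2 * r * b ^ (-(|t₀| + r)) * (φ t₀ - K * r)
      = volume.real (Icc (t₀ - r) (t₀ + r)) • (b ^ (-(|t₀| + r)) * (φ t₀ - K * r)) := by
        rw [Real.volume_real_Icc_of_le (by linarith), smul_eq_mul]; ring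
    _ ≤ ∫ t in Icc (t₀ - r) (t₀ + r), φ t * b ^ (-|t|) :=
        setIntegral_ge_of_const_le measurableSet_Icc measure_Icc_lt_top.ne hle hint.integrableOn
    _ ≤ ∫ t, φ t * b ^ (-|t|) :=
        setIntegral_le_integral hint (Eventually.of_forall fun t =>
          mul_nonneg (hφ0 t) (Real.rpow_pos_of_pos (zero_lt_one.trans hb) _).le)

variable {ι : Type*} {l : Filter ι} {φs : ι → ℝ → ℝ}

lemma tendsto_zero_of_tendsto_integral_mul_rpow_neg_abs (hb : 1 < b)
    (hφ : ∀ i, LipschitzWith K (φs i)) (hφ0 : ∀ i, 0 ≤ φs i)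
    (h : Tendsto (fun i => ∫ t, φs i t * b ^ (-|t|)) l (𝓝 0)) (t₀ : ℝ) :
    Tendsto (fun i => φs i t₀) l (𝓝 0) := by
  refine tendsto_order.2 ⟨fun a ha => Eventually.of_forall fun i => ha.trans_le (hφ0 i t₀),
    fun ε hε => ?_⟩
  obtain ⟨r, hr, hKr⟩ := exists_pos_mul_lt hε K
  have hc : 0 < 2 * r * b ^ (-(|t₀| + r)) := by
    have := Real.rpow_pos_of_pos (zero_lt_one.trans hb) (-(|t₀| + r))
    positivity
  filter_upwards [h.eventually_lt_const (mul_pos hc (sub_pos.2 hKr))] with i hi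
  have := (hφ i).mul_sub_le_integral_mul_rpow_neg_abs hb (hφ0 i) t₀ hr
  exact (sub_lt_sub_iff_right _).1 (lt_of_mul_lt_mul_left (this.trans_lt hi) hc.le)

lemma tendsto_integral_mul_rpow_neg_abs_of_tendsto [l.IsCountablyGenerated] (hb : 1 < b)
    (hφ : ∀ i, LipschitzWith K (φs i)) (h : ∀ t, Tendsto (fun i => φs i t) l (𝓝 0)) :
    Tendsto (fun i => ∫ t, φs i t * b ^ (-|t|)) l (𝓝 0) := by
  have hb0 : 0 < b := zero_lt_one.trans hb
  have hbound : ∀ᶠ i in l, ∀ᵐ t, ‖φs i t * b ^ (-|t|)‖ ≤ (1 + K * |t|) * b ^ (-|t|) := by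
    filter_upwards [Metric.tendsto_nhds.1 (h 0) 1 one_pos] with i hi
    rw [Real.dist_0_eq_abs] at hi
    refine Eventually.of_forall fun t => ((hφ i).norm_mul_rpow_neg_abs_le hb0 t).trans ?_
    have := Real.rpow_pos_of_pos hb0 (-|t|)
    gcongr
  have := tendsto_integral_filter_of_dominated_convergence (f := fun _ => 0) _
    (Eventually.of_forall fun i =>
      ((hφ i).continuous.mul (continuous_rpow_neg_abs hb0)).aestronglyMeasurable)
    hbound (integrable_add_mul_abs_mul_rpow_neg_abs hb 1 K)
    (Eventually.of_forall fun t => by simpa using (h t).mul_const (b ^ (-|t|)))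
  rwa [integral_zero] at this

end

lemma LipschitzWith.dist_comp {α X : Type*} [PseudoMetricSpace α] [PseudoMetricSpace X]
    {f g : α → X} {Kf Kg : ℝ≥0} (hf : LipschitzWith Kf f) (hg : LipschitzWith Kg g) :
    LipschitzWith (Kf + Kg) fun t => dist (f t) (g t) := by
  refine LipschitzWith.of_le_add_mul _ fun x y => ?_
  have := dist_triangle4 (f x) (f y) (g y) (g x)
  have hfx := hf.dist_le_mul x y
  have hgx := hg.dist_le_mul y x
  rw [dist_comm y x] at hgx
  push_cast
  linarith

open Filter in
/-- For complete isometric geodesics `gᵢ, g : ℝ → X`, convergence in the Gromov metric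
`d_GX(gᵢ, g) = ∫ dist (gᵢ t) (g t) * 2 ^ (-|t|) dt → 0` is equivalent to pointwise
convergence `gᵢ(t) → g(t)` for every `t`. -/
theorem stmt9 {X : Type*} [MetricSpace X]
    (gs : ℕ → ℝ → X) (g : ℝ → X)
    (hgs : ∀ i, ∀ s t : ℝ, dist (gs i s) (gs i t) = |s - t|)
    (hg : ∀ s t : ℝ, dist (g s) (g t) = |s - t|) :
    Tendsto (fun i => ∫ t : ℝ, dist (gs i t) (g t) * (2 : ℝ) ^ (-|t|)) atTop (nhds 0) ↔
      ∀ t : ℝ, Tendsto (fun i => gs i t) atTop (nhds (g t)) := by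
  have hgs_iso (i : ℕ) : Isometry (gs i) :=
    Isometry.of_dist_eq fun s t => by rw [hgs, Real.dist_eq]
  have hg_iso : Isometry g := Isometry.of_dist_eq fun s t => by rw [hg, Real.dist_eq]
  have hlip (i : ℕ) := (hgs_iso i).lipschitz.dist_comp hg_iso.lipschitz
  exact ⟨fun h t => tendsto_iff_dist_tendsto_zero.2 <|
      tendsto_zero_of_tendsto_integral_mul_rpow_neg_abs one_lt_two hlip
        (fun i t => dist_nonneg) h t,
    fun h => tendsto_integral_mul_rpow_neg_abs_of_tendsto one_lt_two hlip fun t =>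
      tendsto_iff_dist_tendsto_zero.1 (h t)⟩
end

section
/- Work in ℝⁿ with coordinates x₁,…,xₙ (1-indexed), with n ≥ 1. Let k be an integer with 1 ≤ k and 2k ≤ n, and let C > 0. Let B ⊆ ℝⁿ be a set satisfying: (cone) 0 ∈ B, c·b ∈ B for all c ≥ 0 and b ∈ B, and b + b' ∈ B for all b, b' ∈ B; (chamber) B ⊆ 𝒞 = {x : x₁ ≥ x₂ ≥ ⋯ ≥ xₙ}; (involution-invariance) ι(B) ⊆ B, where (ι x)ᵢ = −x_{n+1−i}; (degeneracy) every b ∈ B with b ≠ 0 has bᵢ = 0 for some index i; (gap) b_k − b_{k+1} ≥ C·‖b‖ for every b ∈ B. Then: (a) for every b ∈ B with b ≠ 0 and every index i with bᵢ = 0 one has k+1 ≤ i ≤ n−k; and (b) if B ≠ {0} then 2k < n. -/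
/-!
Suppose a nonzero `b ∈ B` vanishes at some index `i < k` (0-indexed). Monotonicity and the gap
make every coordinate from `k` on negative, so `ι b` is positive at `i`. For a generic `t > 0`
the element `ι b + t b ∈ B` is then nonzero, and a zero `m` of it forces `b m = b m.rev = 0`
(genericity rules out `b m ≠ 0`); but one of `m`, `m.rev` is at least `k`, where `b` is negative.
Applying this to `b` and to `ι b` confines the zeros of `b` to `[k, n - 1 - k]`.
-/

namespace WeylChamber

variable {n : ℕ}

def opposition (x : EuclideanSpace ℝ (Fin n)) : EuclideanSpace ℝ (Fin n) :=
  WithLp.toLp 2 fun i => -x i.rev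

@[simp]
theorem opposition_apply (x : EuclideanSpace ℝ (Fin n)) (i : Fin n) :
    opposition x i = -x i.rev :=
  rfl

theorem opposition_ne_zero {x : EuclideanSpace ℝ (Fin n)} (hx : x ≠ 0) :
    opposition x ≠ 0 := by
  contrapose! hx
  ext i
  simpa using congrArg (fun y : EuclideanSpace ℝ (Fin n) => y i.rev) hx

theorem _root_.Fin.le_rev_of_lt {q m : Fin n} (hqn : 2 * (q : ℕ) ≤ n) (hm : m < q) :
    q ≤ m.rev := by
  rw [Fin.le_def, Fin.val_rev]
  omega

section Cone

variable {B : Set (EuclideanSpace ℝ (Fin n))}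
  (hsmul : ∀ c : ℝ, 0 ≤ c → ∀ b ∈ B, c • b ∈ B)
  (hadd : ∀ b ∈ B, ∀ b' ∈ B, b + b' ∈ B)
  (hchamber : ∀ b ∈ B, ∀ i j : Fin n, i ≤ j → b j ≤ b i)
  (hinv : ∀ b ∈ B, opposition b ∈ B)
  (hdeg : ∀ b ∈ B, b ≠ 0 → ∃ i : Fin n, b i = 0)
  {p q : Fin n} (hpq : (p : ℕ) + 1 = q) (hqn : 2 * (q : ℕ) ≤ n)
  (hgap : ∀ b ∈ B, b ≠ 0 → b q < b p)
include hchamber hpq hgap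

theorem apply_neg_of_apply_eq_zero {b : EuclideanSpace ℝ (Fin n)} (hb : b ∈ B) (hb0 : b ≠ 0)
    {i : Fin n} (hi : b i = 0) (hiq : i < q) {j : Fin n} (hqj : q ≤ j) : b j < 0 :=
  calc b j ≤ b q := hchamber b hb _ _ hqj
    _ < b p := hgap b hb hb0
    _ ≤ b i := hchamber b hb _ _ (Fin.le_def.2 (by omega))
    _ = 0 := hi

include hsmul hadd hinv hdeg hqn

theorem le_of_apply_eq_zero {b : EuclideanSpace ℝ (Fin n)} (hb : b ∈ B) (hb0 : b ≠ 0)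
    {i : Fin n} (hi : b i = 0) : q ≤ i := by
  by_contra! hiq
  have hneg : ∀ {j : Fin n}, q ≤ j → b j < 0 :=
    apply_neg_of_apply_eq_zero hchamber hpq hgap hb hb0 hi hiq
  obtain ⟨t, ht0, ht⟩ : ∃ t : ℝ, 0 < t ∧ t ∉ Set.range fun m : Fin n => b m.rev / b m :=
    ((Set.Ioi_infinite 0).sdiff (Set.finite_range _)).nonempty
  have hmem : opposition b + t • b ∈ B := hadd _ (hinv b hb) _ (hsmul t ht0.le b hb)
  have hpos : 0 < (opposition b + t • b) i := by
    simpa [hi] using hneg (Fin.le_rev_of_lt hqn hiq)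
  obtain ⟨m, hm⟩ := hdeg _ hmem (fun h => by simp [h] at hpos)
  replace hm : b m.rev = t * b m := by
    simp only [PiLp.add_apply, opposition_apply, PiLp.smul_apply, smul_eq_mul] at hm
    linarith
  by_cases hbm : b m = 0
  · rw [hbm, mul_zero] at hm
    rcases lt_or_ge m q with hmq | hqm
    · exact (hneg (Fin.le_rev_of_lt hqn hmq)).ne hm
    · exact (hneg hqm).ne hbm
  · exact ht ⟨m, by simp [hm, hbm]⟩

theorem le_and_le_rev_of_apply_eq_zero {b : EuclideanSpace ℝ (Fin n)} (hb : b ∈ B)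
    (hb0 : b ≠ 0) {i : Fin n} (hi : b i = 0) : q ≤ i ∧ q ≤ i.rev :=
  ⟨le_of_apply_eq_zero hsmul hadd hchamber hinv hdeg hpq hqn hgap hb hb0 hi,
    le_of_apply_eq_zero hsmul hadd hchamber hinv hdeg hpq hqn hgap (hinv b hb)
      (opposition_ne_zero hb0) (by simp [hi])⟩

end Cone

end WeylChamber

/-- Combinatorial-convexity heart of Step (II) of Choi–Stecker (Proposition 4.2):
Let `B ⊆ ℝⁿ` be a convex cone contained in the closed Weyl chamber
`{x : x₁ ≥ ⋯ ≥ xₙ}` (coordinates `1`-indexed via `i : Fin n ↦ i+1`), invariant under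
the opposition involution `(ι x)ᵢ = -x_{n+1-i}`, such that every nonzero `b ∈ B` has a
vanishing coordinate, and satisfying the gap condition `b_k - b_{k+1} ≥ C‖b‖`.
Then every vanishing coordinate of any nonzero `b ∈ B` has (1-indexed) index in
`[k+1, n-k]`, and if `B ≠ {0}` then `2k < n`. -/
theorem stmt10 (n k : ℕ) (hk : 1 ≤ k) (hkn : 2 * k ≤ n)
    (C : ℝ) (hC : 0 < C)
    (B : Set (EuclideanSpace ℝ (Fin n)))
    (hzero : (0 : EuclideanSpace ℝ (Fin n)) ∈ B)
    (hsmul : ∀ c : ℝ, 0 ≤ c → ∀ b ∈ B, c • b ∈ B)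
    (hadd : ∀ b ∈ B, ∀ b' ∈ B, b + b' ∈ B)
    (hchamber : ∀ b ∈ B, ∀ i j : Fin n, i ≤ j → b j ≤ b i)
    (hinv : ∀ b ∈ B, (WithLp.toLp 2 (fun i : Fin n => -b i.rev) : EuclideanSpace ℝ (Fin n)) ∈ B)
    (hdeg : ∀ b ∈ B, b ≠ 0 → ∃ i : Fin n, b i = 0)
    (hgap : ∀ b ∈ B, b ⟨k - 1, by omega⟩ - b ⟨k, by omega⟩ ≥ C * ‖b‖) :
    (∀ b ∈ B, b ≠ 0 → ∀ i : Fin n, b i = 0 →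
        k + 1 ≤ (i : ℕ) + 1 ∧ (i : ℕ) + 1 ≤ n - k) ∧
      (B ≠ {0} → 2 * k < n) := by
  have hstrict : ∀ b ∈ B, b ≠ 0 → b ⟨k, by omega⟩ < b ⟨k - 1, by omega⟩ := by
    intro b hb hb0
    have := mul_pos hC (norm_pos_iff.2 hb0)
    linarith [hgap b hb]
  have hzeros : ∀ b ∈ B, b ≠ 0 → ∀ i : Fin n, b i = 0 →
      k + 1 ≤ (i : ℕ) + 1 ∧ (i : ℕ) + 1 ≤ n - k := by
    intro b hb hb0 i hi
    have := WeylChamber.le_and_le_rev_of_apply_eq_zero hsmul hadd hchamber hinv hdeg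
      (p := ⟨k - 1, by omega⟩) (q := ⟨k, by omega⟩) (Nat.sub_add_cancel hk) hkn hstrict
      hb hb0 hi
    simp only [Fin.le_def, Fin.val_rev] at this
    omega
  refine ⟨hzeros, fun hB => ?_⟩
  obtain ⟨b, hb, hb0⟩ : ∃ b ∈ B, b ≠ 0 := by
    contrapose! hB
    exact Set.eq_singleton_iff_unique_mem.2 ⟨hzero, hB⟩
  obtain ⟨i, hi⟩ := hdeg b hb hb0
  have := hzeros b hb hb0 i hi
  omega
end
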